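/- arXiv:2410.05422 — 10 statements merged into one kernel-verified Lean document; each statement's English description precedes it below -/
import Mathlib

section
/- If a finite simple graph G admits a neighborhood 3-balanced coloring ℓ, then for distinct colors i ≠ j the number of edges whose endpoints are colored {i, j} equals 2|E(G)|/9, the number of edges with both endpoints colored i equals |E(G)|/9, and consequently 9 divides |E(G)|. -/
/-- A coloring `ℓ : V → ZMod 3` of a simple graph `G` is neighborhood 3-balanced if
every vertex has an equal number of neighbors of each of the three colors. -/
def NBalanced {V : Type*} (G : SimpleGraph V) (ℓ : V → ZMod 3) : Prop :=
  ∀ v : V, ∀ i j : ZMod 3,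
    {w | G.Adj v w ∧ ℓ w = i}.ncard = {w | G.Adj v w ∧ ℓ w = j}.ncard

/-!
Let `P(i, j)` count the darts (ordered adjacent pairs) running from color `i` to color `j`.
Summing the balance condition over the vertices of color `i` shows that `P(i, j)` does not
depend on `j`; since `P` is symmetric, it is a constant `p`. An edge colored `{i, i}` carries two
darts of type `(i, i)`, and an edge colored `{i, j}` with `i ≠ j` one dart of type `(i, j)` and
one of type `(j, i)`. Hence there are `p / 2` edges colored `{i, i}`, `p` edges colored `{i, j}`,
and `2 |E| = k² p` for `k` colors; with `k = 3` this is the claim.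
-/

open Finset

namespace SimpleGraph

variable {V α : Type*} [Fintype V] (G : SimpleGraph V) [DecidableRel G.Adj] [DecidableEq α]
  (ℓ : V → α)

def dartColorCount (i j : α) : ℕ := #{d : G.Dart | ℓ d.fst = i ∧ ℓ d.snd = j}

theorem dartColorCount_eq_sum [DecidableEq V] (i j : α) :
    G.dartColorCount ℓ i j = ∑ v with ℓ v = i, #{w ∈ G.neighborFinset v | ℓ w = j} := by
  rw [dartColorCount, card_eq_sum_card_fiberwise (f := fun d : G.Dart => d.fst)
    (t := {v | ℓ v = i}) (fun _ hd => by simp_all)]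
  refine sum_congr rfl fun v hv => ?_
  refine card_bij (fun d _ => d.snd) (fun d hd => ?_) ?_ ?_
  · simp only [mem_filter, mem_univ, true_and, mem_neighborFinset] at hd ⊢
    exact ⟨hd.2 ▸ d.adj, hd.1.2⟩
  · simp only [mem_filter, mem_univ, true_and]
    intro d₁ h₁ d₂ h₂ h
    exact Dart.ext _ _ (Prod.ext (h₁.2.trans h₂.2.symm) h)
  · intro w hw
    simp only [mem_filter, mem_neighborFinset] at hw
    exact ⟨⟨(v, w), hw.1⟩, by simp_all, rfl⟩

theorem dartColorCount_comm (i j : α) : G.dartColorCount ℓ i j = G.dartColorCount ℓ j i :=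
  card_nbij' Dart.symm Dart.symm (fun _ hd => by simp_all [Dart.symm])
    (fun _ hd => by simp_all [Dart.symm]) (fun d _ => d.symm_symm) (fun d _ => d.symm_symm)

theorem sum_dartColorCount [Fintype α] :
    ∑ i, ∑ j, G.dartColorCount ℓ i j = 2 * #G.edgeFinset := by
  rw [← dart_card_eq_twice_card_edges, ← card_univ,
    card_eq_sum_card_fiberwise (f := fun d : G.Dart => (ℓ d.fst, ℓ d.snd)) (t := univ)
      (fun _ _ => mem_univ _), ← univ_product_univ, sum_product]
  simp only [dartColorCount, Prod.ext_iff]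

theorem two_mul_card_edgeFinset_map_eq [DecidableEq V] (s : Sym2 α) :
    2 * #{e ∈ G.edgeFinset | e.map ℓ = s} = #{d : G.Dart | d.edge.map ℓ = s} := by
  rw [card_eq_sum_card_fiberwise (f := Dart.edge) (t := {e ∈ G.edgeFinset | e.map ℓ = s})
    (fun d hd => by simp_all [d.edge_mem]), mul_comm, ← smul_eq_mul, ← sum_const]
  refine sum_congr rfl fun e he => ?_
  rw [mem_filter, mem_edgeFinset] at he
  rw [← G.dart_edge_fiber_card e he.1, filter_filter]
  congr 1
  ext d
  simp only [mem_filter, mem_univ, true_and, iff_and_self]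
  rintro rfl
  exact he.2

theorem two_mul_card_edgeFinset_map_eq_diag [DecidableEq V] (i : α) :
    2 * #{e ∈ G.edgeFinset | e.map ℓ = s(i, i)} = G.dartColorCount ℓ i i := by
  simp only [two_mul_card_edgeFinset_map_eq, dartColorCount, Dart.edge, Sym2.map_mk,
    Sym2.eq_iff, or_self]

theorem two_mul_card_edgeFinset_map_eq_of_ne [DecidableEq V] {i j : α} (hij : i ≠ j) :
    2 * #{e ∈ G.edgeFinset | e.map ℓ = s(i, j)} =
      G.dartColorCount ℓ i j + G.dartColorCount ℓ j i := by
  rw [two_mul_card_edgeFinset_map_eq, dartColorCount, dartColorCount,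
    ← card_union_of_disjoint (disjoint_filter.2 fun _ _ h₁ h₂ => hij (h₁.1.symm.trans h₂.1)),
    ← filter_or]
  simp only [Dart.edge, Sym2.map_mk, Sym2.eq_iff]

theorem ncard_edgeSet_filter (p : Sym2 V → Prop) [DecidablePred p] :
    {e ∈ G.edgeSet | p e}.ncard = #{e ∈ G.edgeFinset | p e} := by
  simp only [← Set.ncard_coe_finset, coe_filter, mem_edgeFinset]

/-- `NBalanced` for an arbitrary color type. -/
def IsNeighborBalanced : Prop :=
  ∀ v i j, #{w ∈ G.neighborFinset v | ℓ w = i} = #{w ∈ G.neighborFinset v | ℓ w = j}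

variable {G ℓ}

namespace IsNeighborBalanced

theorem dartColorCount_eq [DecidableEq V] (hbal : G.IsNeighborBalanced ℓ) (i j k l : α) :
    G.dartColorCount ℓ i j = G.dartColorCount ℓ k l := by
  have right (i j k : α) : G.dartColorCount ℓ i j = G.dartColorCount ℓ i k := by
    simp only [dartColorCount_eq_sum, hbal _ j k]
  rw [right i j k, dartColorCount_comm, right k i l]

theorem two_mul_card_edgeFinset [DecidableEq V] [Fintype α] (hbal : G.IsNeighborBalanced ℓ)
    (i j : α) : 2 * #G.edgeFinset = Fintype.card α ^ 2 * G.dartColorCount ℓ i j := by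
  rw [← G.sum_dartColorCount ℓ, sum_congr rfl fun k _ => sum_congr rfl fun l _ =>
    hbal.dartColorCount_eq k l i j]
  simp only [sum_const, card_univ, smul_eq_mul]
  ring

theorem card_edgeFinset_map_eq_of_ne [DecidableEq V] (hbal : G.IsNeighborBalanced ℓ)
    {i j : α} (hij : i ≠ j) :
    #{e ∈ G.edgeFinset | e.map ℓ = s(i, j)} = G.dartColorCount ℓ i j := by
  have h := G.two_mul_card_edgeFinset_map_eq_of_ne ℓ hij
  rw [hbal.dartColorCount_eq j i i j] at h
  omega

theorem card_sq_mul_card_edgeFinset_map_eq_diag [DecidableEq V] [Fintype α]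
    (hbal : G.IsNeighborBalanced ℓ) (i : α) :
    Fintype.card α ^ 2 * #{e ∈ G.edgeFinset | e.map ℓ = s(i, i)} = #G.edgeFinset := by
  have h := hbal.two_mul_card_edgeFinset i i
  rw [← two_mul_card_edgeFinset_map_eq_diag] at h
  linarith

theorem card_sq_mul_card_edgeFinset_map_eq_of_ne [DecidableEq V] [Fintype α]
    (hbal : G.IsNeighborBalanced ℓ) {i j : α} (hij : i ≠ j) :
    Fintype.card α ^ 2 * #{e ∈ G.edgeFinset | e.map ℓ = s(i, j)} = 2 * #G.edgeFinset := by
  rw [hbal.card_edgeFinset_map_eq_of_ne hij, hbal.two_mul_card_edgeFinset i j]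

end IsNeighborBalanced

end SimpleGraph

theorem NBalanced.isNeighborBalanced {V : Type*} [Fintype V] {G : SimpleGraph V}
    [DecidableRel G.Adj] {ℓ : V → ZMod 3} (h : NBalanced G ℓ) : G.IsNeighborBalanced ℓ := by
  intro v i j
  simpa only [← Set.ncard_coe_finset, coe_filter, SimpleGraph.mem_neighborFinset] using h v i j

theorem stmt1 {V : Type*} [Fintype V] (G : SimpleGraph V) (ℓ : V → ZMod 3)
    (h : NBalanced G ℓ) :
    (∀ i j : ZMod 3, i ≠ j →
      9 * {e ∈ G.edgeSet | Sym2.map ℓ e = s(i, j)}.ncard = 2 * G.edgeSet.ncard) ∧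
    (∀ i : ZMod 3,
      9 * {e ∈ G.edgeSet | Sym2.map ℓ e = s(i, i)}.ncard = G.edgeSet.ncard) ∧
    9 ∣ G.edgeSet.ncard := by
  classical
  have hbal := h.isNeighborBalanced
  have hcard : Fintype.card (ZMod 3) ^ 2 = 9 := by rw [ZMod.card]; norm_num
  have hE : G.edgeSet.ncard = #G.edgeFinset := by
    rw [← SimpleGraph.coe_edgeFinset, Set.ncard_coe_finset]
  simp only [G.ncard_edgeSet_filter, hE, ← hcard]
  exact ⟨fun i j => hbal.card_sq_mul_card_edgeFinset_map_eq_of_ne,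
    hbal.card_sq_mul_card_edgeFinset_map_eq_diag,
    ⟨_, (hbal.card_sq_mul_card_edgeFinset_map_eq_diag 0).symm⟩⟩
end

section
/- Let m, j be positive integers with m ≥ 5 and 1 ≤ j < m/2. If the generalized Petersen graph G(m, j) admits a neighborhood 3-balanced coloring, then 3 divides m. -/
/-- The generalized Petersen graph `G(m, j)`.  Vertices: `Sum.inl x` are the exterior
vertices `v_x` and `Sum.inr x` are the interior vertices `u_x`, for `x : ZMod m`.
Edges: `v_i v_{i+1}`, `v_i u_i`, and `u_i u_{i+j}`. -/
def genPetersen (m j : ℕ) : SimpleGraph (ZMod m ⊕ ZMod m) :=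
  SimpleGraph.fromRel (fun a b =>
    match a, b with
    | Sum.inl x, Sum.inl y => y = x + 1
    | Sum.inl x, Sum.inr y => y = x
    | Sum.inr x, Sum.inr y => y = x + (j : ZMod m)
    | _, _ => False)

/-!
Since `2 * j < m`, the graph `G(m, j)` is cubic, so a neighborhood 3-balanced coloring gives every
vertex exactly one neighbor of each color. Counting the pairs (vertex, neighbor of color `0`) in two
ways gives `|V| = 3 · #ℓ⁻¹(0)`, and `|V| = 2m`.
-/

open Finset

section BalancedColoring

variable {V : Type*} [Fintype V] {G : SimpleGraph V} [DecidableRel G.Adj]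

theorem SimpleGraph.sum_card_filter_neighborFinset {α : Type*} [DecidableEq α] (ℓ : V → α)
    (c : α) : ∑ v, #{w ∈ G.neighborFinset v | ℓ w = c} = ∑ w with ℓ w = c, G.degree w := by
  have := sum_card_bipartiteAbove_eq_sum_card_bipartiteBelow (s := univ)
    (t := {w | ℓ w = c}) (r := G.Adj)
  simp only [bipartiteAbove, bipartiteBelow] at this
  convert this using 2 with v _ w _
  · congr 1; ext w; simp [and_comm]
  · rw [← card_neighborFinset_eq_degree]; congr 1; ext v; simp [adj_comm]

variable {ℓ : V → ZMod 3}

theorem NBalanced.three_mul_card_filter_neighborFinset (hℓ : NBalanced G ℓ) (v : V)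
    (c : ZMod 3) : 3 * #{w ∈ G.neighborFinset v | ℓ w = c} = G.degree v := by
  have hcard (c' : ZMod 3) :
      #{w ∈ G.neighborFinset v | ℓ w = c'} = #{w ∈ G.neighborFinset v | ℓ w = c} := by
    simpa only [← SimpleGraph.mem_neighborFinset, ← coe_filter, Set.ncard_coe_finset]
      using hℓ v c' c
  rw [← G.card_neighborFinset_eq_degree, card_eq_sum_card_fiberwise (s := G.neighborFinset v)
    (f := ℓ) (t := univ) (fun _ _ => mem_univ _)]
  simp only [hcard, sum_const, card_univ, ZMod.card, smul_eq_mul]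

theorem NBalanced.three_dvd_card (hℓ : NBalanced G ℓ) {d : ℕ}
    (hG : G.IsRegularOfDegree d) (hd : d ≠ 0) : 3 ∣ Fintype.card V := by
  have hsum := congrArg (3 * ·) (G.sum_card_filter_neighborFinset ℓ 0)
  simp only [mul_sum, hℓ.three_mul_card_filter_neighborFinset, hG.degree_eq, sum_const,
    card_univ, smul_eq_mul] at hsum
  exact ⟨_, Nat.eq_of_mul_eq_mul_right (Nat.pos_of_ne_zero hd) (hsum.trans (by ring))⟩

end BalancedColoring

theorem ZMod.natCast_ne_zero_of_pos_of_lt {m n : ℕ} (hn : 0 < n) (hnm : n < m) :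
    (n : ZMod m) ≠ 0 := by
  rw [ne_eq, ZMod.natCast_eq_zero_iff]
  exact Nat.not_dvd_of_pos_of_lt hn hnm

section GenPetersen

variable {m j : ℕ}

theorem genPetersen_adj_inl (h1 : (1 : ZMod m) ≠ 0) (x : ZMod m) (w : ZMod m ⊕ ZMod m) :
    (genPetersen m j).Adj (Sum.inl x) w ↔
      w = Sum.inl (x + 1) ∨ w = Sum.inl (x - 1) ∨ w = Sum.inr x := by
  rcases w with y | y
  · simp only [genPetersen, SimpleGraph.fromRel_adj, ne_eq, Sum.inl.injEq, reduceCtorEq, or_false]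
    constructor
    · rintro ⟨-, rfl | rfl⟩ <;> simp
    · rintro (rfl | rfl) <;> simp [h1, sub_eq_self, eq_comm (a := x)]
  · simp [genPetersen, eq_comm]

theorem genPetersen_adj_inr (hj : (j : ZMod m) ≠ 0) (x : ZMod m) (w : ZMod m ⊕ ZMod m) :
    (genPetersen m j).Adj (Sum.inr x) w ↔
      w = Sum.inr (x + j) ∨ w = Sum.inr (x - j) ∨ w = Sum.inl x := by
  rcases w with y | y
  · simp [genPetersen, eq_comm]
  · simp only [genPetersen, SimpleGraph.fromRel_adj, ne_eq, Sum.inr.injEq, reduceCtorEq, or_false]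
    constructor
    · rintro ⟨-, rfl | rfl⟩ <;> simp
    · rintro (rfl | rfl) <;> simp [hj, sub_eq_self, eq_comm (a := x)]

theorem genPetersen_isRegularOfDegree_three [NeZero m] [DecidableRel (genPetersen m j).Adj]
    (h2 : (2 : ZMod m) ≠ 0) (h2j : 2 * (j : ZMod m) ≠ 0) :
    (genPetersen m j).IsRegularOfDegree 3 := by
  have h1 : (1 : ZMod m) ≠ 0 := fun h => h2 (by linear_combination 2 * h)
  have hj : (j : ZMod m) ≠ 0 := fun h => h2j (by linear_combination 2 * h)
  intro v
  rw [← SimpleGraph.card_neighborFinset_eq_degree, card_eq_three]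
  rcases v with x | x
  · refine ⟨Sum.inl (x + 1), Sum.inl (x - 1), Sum.inr x, ?_, by simp, by simp, ?_⟩
    · exact fun h => h2 (by linear_combination Sum.inl.inj h)
    · ext w; simp [genPetersen_adj_inl h1]
  · refine ⟨Sum.inr (x + j), Sum.inr (x - j), Sum.inl x, ?_, by simp, by simp, ?_⟩
    · exact fun h => h2j (by linear_combination Sum.inr.inj h)
    · ext w; simp [genPetersen_adj_inr hj]

end GenPetersen

theorem stmt5_general (m j : ℕ) (hj1 : 1 ≤ j) (hj2 : 2 * j < m)
    (h : ∃ ℓ, NBalanced (genPetersen m j) ℓ) : 3 ∣ m := by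
  classical
  obtain ⟨ℓ, hℓ⟩ := h
  have : NeZero m := ⟨by omega⟩
  have h2 : ((2 : ℕ) : ZMod m) ≠ 0 := ZMod.natCast_ne_zero_of_pos_of_lt two_pos (by omega)
  have h2j : ((2 * j : ℕ) : ZMod m) ≠ 0 := ZMod.natCast_ne_zero_of_pos_of_lt (by omega) hj2
  push_cast at h2 h2j
  have h3 := hℓ.three_dvd_card (genPetersen_isRegularOfDegree_three h2 h2j) three_ne_zero
  rw [Fintype.card_sum, ZMod.card, ← two_mul] at h3
  exact Nat.Coprime.dvd_of_dvd_mul_left (by norm_num) h3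

theorem stmt5 (m j : ℕ) (hm : 5 ≤ m) (hj1 : 1 ≤ j) (hj2 : 2 * j < m)
    (h : ∃ ℓ, NBalanced (genPetersen m j) ℓ) : 3 ∣ m :=
  stmt5_general m j hj1 hj2 h
end

section
/- Let m, j be positive integers with m ≥ 5 and 1 ≤ j < m/2. The generalized Petersen graph G(m, j) admits a neighborhood 3-balanced coloring if and only if 3 divides m and 3 does not divide j. -/
/-! In a balanced colouring of a cubic graph the three neighbours of every vertex receive the
three different colours. Write `a x`, `b x` for the colours of `v_x`, `u_x`. Rainbow
neighbourhoods force `a (x ± j)` into `{a (x - 1), a (x + 1)}`; so if `a (s - 2) = a (s + 2)`,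
both `b (s + j)` and `b (s - j)` are the colour missing from `{a s, a (s + 2)}`, which the
neighbourhood of `u_s` forbids. Hence `a x, a (x + 2), a (x + 4)` are pairwise distinct, i.e. an
arithmetic progression in `ZMod 3`, and `a (x + 2k) = a x + k d` with `d ≠ 0`. Going once around
the rim (`k = m`) gives `3 ∣ m`; if `3 ∣ j`, then `a`, and with it `b`, is `2j`-periodic, which
the neighbourhood of `u_j` forbids. Conversely, reducing indices mod 3 on both rims is balanced
when `3 ∣ m` and `3 ∤ j`. -/

open Sum

def Rainbow (x y z : ZMod 3) : Prop := x ≠ y ∧ x ≠ z ∧ y ≠ z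

instance (x y z : ZMod 3) : Decidable (Rainbow x y z) :=
  inferInstanceAs (Decidable (_ ∧ _ ∧ _))

namespace Rainbow

theorem iff_forall_eq_or {x y z : ZMod 3} : Rainbow x y z ↔ ∀ c, c = x ∨ c = y ∨ c = z := by
  revert x y z; decide

theorem eq_neg_add {x y z : ZMod 3} (h : Rainbow x y z) : z = -(x + y) := by
  revert x y z; decide

theorem eq_or_eq_of_ne {x y z w : ZMod 3} (h : Rainbow x y z) (hw : w ≠ z) : w = x ∨ w = y := by
  revert x y z w; decide

theorem eq_neg_add_of_eq_or_eq {p q r x y : ZMod 3} (h : Rainbow p q r)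
    (hp : p = x ∨ p = y) (hq : q = x ∨ q = y) : r = -(x + y) := by
  revert p q r x y; decide

theorem swap {x y z : ZMod 3} (h : Rainbow x y z) : Rainbow y x z := ⟨h.1.symm, h.2.2, h.2.1⟩

theorem sub_eq_sub {x y z : ZMod 3} (h : Rainbow x y z) : z - y = y - x := by
  revert x y z; decide

theorem sub_add_self {t : ZMod 3} (ht : t ≠ 0) (c : ZMod 3) : Rainbow (c - t) (c + t) c := by
  revert t c; decide

end Rainbow

def NBalancedAt {V : Type*} (G : SimpleGraph V) (ℓ : V → ZMod 3) (v : V) : Prop :=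
  ∀ i j : ZMod 3, {w | G.Adj v w ∧ ℓ w = i}.ncard = {w | G.Adj v w ∧ ℓ w = j}.ncard

theorem nbalancedAt_iff_rainbow {V : Type*} {G : SimpleGraph V} {ℓ : V → ZMod 3}
    {v w₁ w₂ w₃ : V} (hadj : ∀ w, G.Adj v w ↔ w = w₁ ∨ w = w₂ ∨ w = w₃) :
    NBalancedAt G ℓ v ↔ Rainbow (ℓ w₁) (ℓ w₂) (ℓ w₃) := by
  constructor
  · intro h
    refine Rainbow.iff_forall_eq_or.2 fun c => ?_
    have hfin : {w | G.Adj v w ∧ ℓ w = ℓ w₁}.Finite :=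
      (Set.toFinite {w₁, w₂, w₃}).subset fun w hw => by simpa [hadj] using hw.1
    have hpos : {w | G.Adj v w ∧ ℓ w = ℓ w₁}.ncard ≠ 0 :=
      ((Set.ncard_pos hfin).2 ⟨w₁, (hadj w₁).2 (Or.inl rfl), rfl⟩).ne'
    obtain ⟨w, hw, rfl⟩ := Set.nonempty_of_ncard_ne_zero (h c (ℓ w₁) ▸ hpos)
    rcases (hadj w).1 hw with rfl | rfl | rfl <;> simp
  · intro h
    suffices hone : ∀ c, {w | G.Adj v w ∧ ℓ w = c}.ncard = 1 by
      intro i j; rw [hone, hone]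
    intro c
    obtain ⟨h₁₂, h₁₃, h₂₃⟩ := h
    rcases Rainbow.iff_forall_eq_or.1 ⟨h₁₂, h₁₃, h₂₃⟩ c with rfl | rfl | rfl
    · exact Set.ncard_eq_one.2 ⟨w₁, by ext w; simp only [Set.mem_ofPred_eq, hadj]; grind⟩
    · exact Set.ncard_eq_one.2 ⟨w₂, by ext w; simp only [Set.mem_ofPred_eq, hadj]; grind⟩
    · exact Set.ncard_eq_one.2 ⟨w₃, by ext w; simp only [Set.mem_ofPred_eq, hadj]; grind⟩

theorem ne_and_eq_add_or_eq_add_iff {G : Type*} [AddGroup G] {e x y : G} (he : e ≠ 0) :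
    x ≠ y ∧ (y = x + e ∨ x = y + e) ↔ y = x - e ∨ y = x + e := by
  constructor
  · rintro ⟨-, rfl | rfl⟩
    · exact Or.inr rfl
    · exact Or.inl (add_sub_cancel_right y e).symm
  · rintro (rfl | rfl)
    · exact ⟨fun h => he (sub_eq_self.1 h.symm), Or.inr (sub_add_cancel x e).symm⟩
    · exact ⟨by simpa using he, Or.inl rfl⟩

namespace genPetersen

variable {m j : ℕ}

theorem adj_inl (h1 : (1 : ZMod m) ≠ 0) (x : ZMod m) (w : ZMod m ⊕ ZMod m) :
    (genPetersen m j).Adj (inl x) w ↔ w = inl (x - 1) ∨ w = inl (x + 1) ∨ w = inr x := by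
  cases w <;> simp [genPetersen, ne_and_eq_add_or_eq_add_iff h1]

theorem adj_inr (hj : (j : ZMod m) ≠ 0) (x : ZMod m) (w : ZMod m ⊕ ZMod m) :
    (genPetersen m j).Adj (inr x) w ↔ w = inr (x - j) ∨ w = inr (x + j) ∨ w = inl x := by
  cases w <;> simp [genPetersen, ne_and_eq_add_or_eq_add_iff hj, eq_comm]

theorem nbalanced_iff_rainbow (h1 : (1 : ZMod m) ≠ 0) (hj : (j : ZMod m) ≠ 0)
    {ℓ : ZMod m ⊕ ZMod m → ZMod 3} :
    NBalanced (genPetersen m j) ℓ ↔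
      (∀ x, Rainbow (ℓ (inl (x - 1))) (ℓ (inl (x + 1))) (ℓ (inr x))) ∧
        ∀ x, Rainbow (ℓ (inr (x - j))) (ℓ (inr (x + j))) (ℓ (inl x)) := by
  constructor
  · intro h
    exact ⟨fun x => (nbalancedAt_iff_rainbow (adj_inl h1 x)).1 (h (inl x)),
      fun x => (nbalancedAt_iff_rainbow (adj_inr hj x)).1 (h (inr x))⟩
  · rintro ⟨hl, hr⟩ (x | x)
    exacts [(nbalancedAt_iff_rainbow (adj_inl h1 x)).2 (hl x),
      (nbalancedAt_iff_rainbow (adj_inr hj x)).2 (hr x)]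

theorem nbalanced_elim_castHom (h1 : (1 : ZMod m) ≠ 0) (hj : (j : ZMod m) ≠ 0) (hm : 3 ∣ m)
    (hj3 : ¬ 3 ∣ j) :
    NBalanced (genPetersen m j)
      (Sum.elim (ZMod.castHom hm (ZMod 3)) (ZMod.castHom hm (ZMod 3))) := by
  set φ := ZMod.castHom hm (ZMod 3)
  have hφj : φ j ≠ 0 := by rwa [map_natCast, Ne, ZMod.natCast_eq_zero_iff]
  refine (nbalanced_iff_rainbow h1 hj).2 ⟨fun x => ?_, fun x => ?_⟩
  · simpa only [Sum.elim_inl, Sum.elim_inr, map_sub, map_add, map_one] using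
      Rainbow.sub_add_self one_ne_zero (φ x)
  · simpa only [Sum.elim_inl, Sum.elim_inr, map_sub, map_add] using
      Rainbow.sub_add_self hφj (φ x)

end genPetersen

theorem apply_add_nsmul_of_sub_eq_sub {G M : Type*} [AddCommGroup G] [AddCommGroup M]
    {f : G → M} {t : G} (h : ∀ x, f (x + t + t) - f (x + t) = f (x + t) - f x)
    (n : ℕ) (x : G) :
    f (x + n • t) = f x + n • (f (x + t) - f x) := by
  have hd : ∀ n : ℕ, f (x + n • t + t) - f (x + n • t) = f (x + t) - f x := by
    intro n
    induction n with
    | zero => simp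
    | succ n ih => rw [succ_nsmul, ← add_assoc, h, ih]
  induction n with
  | zero => simp
  | succ n ih =>
    rw [succ_nsmul, ← add_assoc, succ_nsmul, ← add_assoc, ← ih, ← hd n]
    abel

theorem ZMod.dvd_of_nsmul_eq_zero {p n : ℕ} [Fact p.Prime] {d : ZMod p} (hd : d ≠ 0)
    (h : n • d = 0) : p ∣ n := by
  rw [nsmul_eq_mul, mul_eq_zero] at h
  exact (ZMod.natCast_eq_zero_iff n p).1 (h.resolve_right hd)

section Necessity

/- `a`, `b` colour the outer and inner rim of the generalized Petersen graph built on the group `G`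
with rim steps `e` and `t`; `hV`, `hU` below say that every vertex sees three colours. -/
variable {G : Type*} [AddCommGroup G] {e t : G} {a b : G → ZMod 3}

theorem apply_add_eq_or_eq (hV : ∀ x, Rainbow (a (x - e)) (a (x + e)) (b x))
    (hU : ∀ x, Rainbow (b (x - t)) (b (x + t)) (a x)) (x : G) :
    a (x + t) = a (x - e) ∨ a (x + t) = a (x + e) :=
  (hV x).eq_or_eq_of_ne (by simpa using (hU (x + t)).2.1.symm)

theorem apply_add_eq_of_apply_sub_two_nsmul_eq
    (hV : ∀ x, Rainbow (a (x - e)) (a (x + e)) (b x))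
    (hU : ∀ x, Rainbow (b (x - t)) (b (x + t)) (a x)) {s : G}
    (hs : a (s - 2 • e) = a (s + 2 • e)) :
    b (s + t) = -(a s + a (s + 2 • e)) := by
  refine (hV (s + t)).eq_neg_add_of_eq_or_eq ?_ ?_
  · have h := apply_add_eq_or_eq hV hU (s - e)
    abel_nf at h hs ⊢
    rwa [hs, or_comm] at h
  · have h := apply_add_eq_or_eq hV hU (s + e)
    abel_nf at h ⊢
    exact h

theorem apply_sub_two_nsmul_ne (hV : ∀ x, Rainbow (a (x - e)) (a (x + e)) (b x))
    (hU : ∀ x, Rainbow (b (x - t)) (b (x + t)) (a x)) (s : G) :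
    a (s - 2 • e) ≠ a (s + 2 • e) := by
  intro hs
  have hU' : ∀ x, Rainbow (b (x - -t)) (b (x + -t)) (a x) := fun x => by
    simpa only [sub_neg_eq_add, ← sub_eq_add_neg] using (hU x).swap
  have hbt := apply_add_eq_of_apply_sub_two_nsmul_eq hV hU hs
  have hbs := apply_add_eq_of_apply_sub_two_nsmul_eq hV hU' hs
  exact (hU s).1 (by rw [sub_eq_add_neg, hbs, hbt])

theorem apply_ne_apply_add_two_nsmul (hV : ∀ x, Rainbow (a (x - e)) (a (x + e)) (b x))
    (x : G) : a x ≠ a (x + 2 • e) := by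
  simpa [two_nsmul, add_assoc] using (hV (x + e)).1

theorem apply_add_two_nsmul_sub (hV : ∀ x, Rainbow (a (x - e)) (a (x + e)) (b x))
    (hU : ∀ x, Rainbow (b (x - t)) (b (x + t)) (a x)) (x : G) :
    a (x + 2 • e + 2 • e) - a (x + 2 • e) = a (x + 2 • e) - a x := by
  have h := apply_sub_two_nsmul_ne hV hU (x + 2 • e)
  rw [add_sub_cancel_right] at h
  exact Rainbow.sub_eq_sub
    ⟨apply_ne_apply_add_two_nsmul hV x, h, apply_ne_apply_add_two_nsmul hV (x + 2 • e)⟩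

theorem not_forall_apply_add_two_nsmul_eq (hV : ∀ x, Rainbow (a (x - e)) (a (x + e)) (b x))
    (hU : ∀ x, Rainbow (b (x - t)) (b (x + t)) (a x)) : ¬ ∀ x, a (x + 2 • t) = a x := by
  intro hper
  have hb : ∀ x, b (x + 2 • t) = b x := fun x => by
    rw [(hV _).eq_neg_add, (hV x).eq_neg_add, ← hper (x - e), ← hper (x + e)]
    abel_nf
  exact (hU t).1 (by simpa [two_nsmul] using (hb 0).symm)

theorem three_dvd_of_nsmul_eq_zero (hV : ∀ x, Rainbow (a (x - e)) (a (x + e)) (b x))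
    (hU : ∀ x, Rainbow (b (x - t)) (b (x + t)) (a x)) {n : ℕ} (hn : n • e = 0) : 3 ∣ n := by
  have hd : a (0 + 2 • e) - a 0 ≠ 0 := sub_ne_zero.2 (apply_ne_apply_add_two_nsmul hV 0).symm
  refine ZMod.dvd_of_nsmul_eq_zero hd ?_
  simpa [smul_comm n 2 e, hn] using
    apply_add_nsmul_of_sub_eq_sub (apply_add_two_nsmul_sub hV hU) n 0

theorem not_three_dvd_of_nsmul_eq (hV : ∀ x, Rainbow (a (x - e)) (a (x + e)) (b x))
    (hU : ∀ x, Rainbow (b (x - t)) (b (x + t)) (a x)) {n : ℕ} (hn : n • e = t) :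
    ¬ 3 ∣ n := by
  intro h3
  refine not_forall_apply_add_two_nsmul_eq hV hU fun x => ?_
  have hn3 : (n : ZMod 3) = 0 := (ZMod.natCast_eq_zero_iff n 3).2 h3
  simpa [smul_comm n 2 e, hn, nsmul_eq_mul, hn3] using
    apply_add_nsmul_of_sub_eq_sub (apply_add_two_nsmul_sub hV hU) n x

end Necessity

theorem stmt7_general (m j : ℕ) (hj1 : 1 ≤ j) (hj2 : 2 * j < m) :
    (∃ ℓ, NBalanced (genPetersen m j) ℓ) ↔ (3 ∣ m ∧ ¬ 3 ∣ j) := by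
  have h1 : (1 : ZMod m) ≠ 0 := by
    have : Fact (1 < m) := ⟨by omega⟩
    exact one_ne_zero
  have hj : (j : ZMod m) ≠ 0 := by
    rw [Ne, ZMod.natCast_eq_zero_iff]
    exact fun h => absurd (Nat.le_of_dvd (by omega) h) (by omega)
  constructor
  · rintro ⟨ℓ, hℓ⟩
    obtain ⟨hV, hU⟩ := (genPetersen.nbalanced_iff_rainbow h1 hj).1 hℓ
    exact ⟨three_dvd_of_nsmul_eq_zero (a := fun x => ℓ (inl x)) (b := fun x => ℓ (inr x))
      hV hU (by simp), not_three_dvd_of_nsmul_eq (a := fun x => ℓ (inl x)) hV hU (by simp)⟩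
  · rintro ⟨hm, hj3⟩
    exact ⟨_, genPetersen.nbalanced_elim_castHom h1 hj hm hj3⟩

theorem stmt7 (m j : ℕ) (hm : 5 ≤ m) (hj1 : 1 ≤ j) (hj2 : 2 * j < m) :
    (∃ ℓ, NBalanced (genPetersen m j) ℓ) ↔ (3 ∣ m ∧ ¬ 3 ∣ j) :=
  stmt7_general m j hj1 hj2
end

section
/- For n ≥ 4, the Möbius ladder M_n (an n-cycle with edges added between opposite vertices) admits a neighborhood 3-balanced coloring if and only if 6 divides n. -/
/-- The Möbius ladder `M_n`: an `n`-cycle `v_0 v_1 ⋯ v_{n-1}` together with the edges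
`v_i v_{i+n/2}` joining opposite pairs of vertices. -/
def mobiusLadder (n : ℕ) : SimpleGraph (ZMod n) :=
  SimpleGraph.fromRel (fun x y => y = x + 1 ∨ y = x + ((n / 2 : ℕ) : ZMod n))

open Set

section Coloring

variable {V : Type*} {G : SimpleGraph V} {ℓ : V → ZMod 3}

theorem NBalanced.surjOn_neighborSet [Finite V] (h : NBalanced G ℓ) {v w : V} (hvw : G.Adj v w) :
    SurjOn ℓ (G.neighborSet v) univ := by
  intro i _
  have hpos : 0 < {u | G.Adj v u ∧ ℓ u = ℓ w}.ncard :=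
    (ncard_pos (toFinite _)).mpr ⟨w, hvw, rfl⟩
  obtain ⟨u, hu, rfl⟩ := (ncard_pos (toFinite _)).mp (h v i (ℓ w) ▸ hpos)
  exact ⟨u, hu, rfl⟩

theorem nBalanced_of_bijOn (h : ∀ v, BijOn ℓ (G.neighborSet v) univ) : NBalanced G ℓ := by
  have hone : ∀ v i, {w | G.Adj v w ∧ ℓ w = i}.ncard = 1 := by
    intro v i
    obtain ⟨w, hw, rfl⟩ := (h v).surjOn (mem_univ i)
    refine ncard_eq_one.mpr ⟨w, Set.ext fun u => ⟨fun ⟨hu, hwu⟩ => (h v).injOn hu hw hwu, ?_⟩⟩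
    rintro rfl
    exact ⟨hw, rfl⟩
  intro v i j
  rw [hone, hone]

end Coloring

section ZModThree

theorem ZMod.three_forall_eq_or_iff (x y z : ZMod 3) :
    (∀ i, i = x ∨ i = y ∨ i = z) ↔ x ≠ y ∧ x ≠ z ∧ y ≠ z := by
  revert x y z; decide

theorem ZMod.three_add_add_eq_zero_of_ne {x y z : ZMod 3} (hxy : x ≠ y) (hxz : x ≠ z)
    (hyz : y ≠ z) : x + y + z = 0 := by
  revert x y z; decide

theorem ZMod.three_sub_eq_sub_of_add_add_eq_zero {x y z : ZMod 3} (h : x + y + z = 0) :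
    x - y = y - z := by
  revert x y z; decide

variable {α : Type*} {f : α → ZMod 3} {a b e : α}

theorem surjOn_triple_univ_iff :
    SurjOn f {a, b, e} univ ↔ f a ≠ f b ∧ f a ≠ f e ∧ f b ≠ f e := by
  rw [← ZMod.three_forall_eq_or_iff, SurjOn, image_insert_eq, image_pair]
  simp [subset_def]

theorem bijOn_triple_univ (hab : f a ≠ f b) (hae : f a ≠ f e) (hbe : f b ≠ f e) :
    BijOn f {a, b, e} univ := by
  refine ⟨mapsTo_univ _ _, ?_, surjOn_triple_univ_iff.mpr ⟨hab, hae, hbe⟩⟩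
  rintro x (rfl | rfl | rfl) y (rfl | rfl | rfl) hxy <;> first | rfl | simp_all

end ZModThree

theorem eq_add_nsmul_of_sub_eq_sub {A : Type*} [AddCommGroup A] {g : ℕ → A}
    (h : ∀ k, g (k + 2) - g (k + 1) = g (k + 1) - g k) (k : ℕ) :
    g k = g 0 + k • (g 1 - g 0) := by
  have hstep : ∀ k, g (k + 1) - g k = g 1 - g 0 := by
    intro k
    induction k with
    | zero => rfl
    | succ k ih => rw [h, ih]
  induction k with
  | zero => simp
  | succ k ih => rw [succ_nsmul, ← add_assoc, ← ih, ← hstep k, add_sub_cancel]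

section MobiusLadder

variable {n : ℕ}

local notation "c" => ((n / 2 : ℕ) : ZMod n)

theorem ZMod.natCast_div_two_add_self (he : Even n) : c + c = 0 := by
  rw [← two_mul, ← Nat.cast_ofNat, ← Nat.cast_mul, Nat.two_mul_div_two_of_even he,
    ZMod.natCast_self]

variable [NeZero n]

theorem mobiusLadder_neighborSet (he : Even n) (v : ZMod n) :
    (mobiusLadder n).neighborSet v = {v + 1, v - 1, v + c} := by
  have h1n : 1 < n := by
    obtain ⟨m, rfl⟩ := he
    have := NeZero.ne (m + m)
    omega
  have : Fact (1 < n) := ⟨h1n⟩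
  have hc : c ≠ 0 := by
    rw [Ne, ZMod.natCast_eq_zero_iff]
    exact Nat.not_dvd_of_pos_of_lt (by omega) (by omega)
  ext w
  simp only [SimpleGraph.mem_neighborSet, mobiusLadder, SimpleGraph.fromRel_adj, mem_insert_iff,
    mem_singleton_iff]
  constructor
  · rintro ⟨-, (rfl | rfl) | (rfl | rfl)⟩
    · exact Or.inl rfl
    · exact Or.inr (Or.inr rfl)
    · exact Or.inr (Or.inl (by ring))
    · refine Or.inr (Or.inr ?_)
      rw [add_assoc, ZMod.natCast_div_two_add_self he, add_zero]
  · rintro (rfl | rfl | rfl)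
    · exact ⟨by simp, Or.inl (Or.inl rfl)⟩
    · exact ⟨fun h => one_ne_zero (by linear_combination h), Or.inr (Or.inl (by ring))⟩
    · exact ⟨by simpa using hc, Or.inl (Or.inr rfl)⟩

theorem mobiusLadder_nBalanced_iff (he : Even n) {ℓ : ZMod n → ZMod 3} :
    NBalanced (mobiusLadder n) ℓ ↔
      ∀ v, ℓ (v + 1) ≠ ℓ (v - 1) ∧ ℓ (v + 1) ≠ ℓ (v + c) ∧ ℓ (v - 1) ≠ ℓ (v + c) := by
  constructor
  · intro h v
    have hadj : (mobiusLadder n).Adj v (v + 1) := by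
      rw [← SimpleGraph.mem_neighborSet, mobiusLadder_neighborSet he]
      exact mem_insert _ _
    have := h.surjOn_neighborSet hadj
    rwa [mobiusLadder_neighborSet he, surjOn_triple_univ_iff] at this
  · intro h
    refine nBalanced_of_bijOn fun v => ?_
    obtain ⟨h₁, h₂, h₃⟩ := h v
    rw [mobiusLadder_neighborSet he]
    exact bijOn_triple_univ h₁ h₂ h₃

theorem NBalanced.mobiusLadder_two_step_sum_eq_zero (he : Even n) {ℓ : ZMod n → ZMod 3}
    (h : NBalanced (mobiusLadder n) ℓ) (v : ZMod n) : ℓ (v + 2) + ℓ v + ℓ (v - 2) = 0 := by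
  rw [mobiusLadder_nBalanced_iff he] at h
  have hsum : ∀ v, ℓ (v + 1) + ℓ (v - 1) + ℓ (v + c) = 0 := fun v =>
    ZMod.three_add_add_eq_zero_of_ne (h v).1 (h v).2.1 (h v).2.2
  have h₁ := hsum (v + 1)
  have h₂ := hsum (v - 1)
  have h₃ := hsum (v + c)
  rw [add_right_comm v c 1, add_sub_right_comm v c 1, add_assoc v c c,
    ZMod.natCast_div_two_add_self he, add_zero] at h₃
  ring_nf at h₁ h₂ h₃ ⊢
  linear_combination h₁ + h₂ - h₃

theorem six_dvd_of_nBalanced_mobiusLadder (he : Even n) {ℓ : ZMod n → ZMod 3}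
    (h : NBalanced (mobiusLadder n) ℓ) : 6 ∣ n := by
  set g : ℕ → ZMod 3 := fun k => ℓ ((2 * k : ℕ) : ZMod n)
  have hg : ∀ k, g (k + 2) - g (k + 1) = g (k + 1) - g k := fun k => by
    have := ZMod.three_sub_eq_sub_of_add_add_eq_zero
      (h.mobiusLadder_two_step_sum_eq_zero he ((2 * (k + 1) : ℕ) : ZMod n))
    convert this using 3 <;> push_cast <;> ring_nf
  have hd : g 1 - g 0 ≠ 0 := by
    have := ((mobiusLadder_nBalanced_iff he).mp h 1).1
    rw [one_add_one_eq_two, sub_self] at this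
    simpa [g, sub_eq_zero] using this
  have hper : g (n / 2) = g 0 := by
    simp only [g, Nat.two_mul_div_two_of_even he, ZMod.natCast_self, Nat.mul_zero, Nat.cast_zero]
  have hprog := eq_add_nsmul_of_sub_eq_sub hg (n / 2)
  rw [hper, left_eq_add, nsmul_eq_mul, mul_eq_zero, or_iff_left hd,
    ZMod.natCast_eq_zero_iff] at hprog
  have := Nat.two_mul_div_two_of_even he
  omega

theorem exists_nBalanced_mobiusLadder (h6 : 6 ∣ n) : ∃ ℓ, NBalanced (mobiusLadder n) ℓ := by
  have h3 : 3 ∣ n := (by norm_num : 3 ∣ 6).trans h6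
  have he : Even n := even_iff_two_dvd.mpr ((by norm_num : 2 ∣ 6).trans h6)
  set f := ZMod.castHom h3 (ZMod 3)
  refine ⟨f, (mobiusLadder_nBalanced_iff he).mpr fun v => ?_⟩
  have hc : f c = 0 := by
    rw [map_natCast, ZMod.natCast_eq_zero_iff]
    omega
  rw [map_add, map_sub, map_add, map_one, hc, add_zero]
  generalize f v = x
  revert x
  decide

end MobiusLadder

theorem stmt10 (n : ℕ) (hn : 4 ≤ n) (hne : Even n) :
    (∃ ℓ, NBalanced (mobiusLadder n) ℓ) ↔ 6 ∣ n := by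
  have : NeZero n := ⟨by omega⟩
  exact ⟨fun ⟨_, h⟩ => six_dvd_of_nBalanced_mobiusLadder hne h, exists_nBalanced_mobiusLadder⟩
end

section
/- Let G_1, …, G_k be graphs that pairwise intersect in exactly one common vertex v₀ (i.e., V(G_i) ∩ V(G_j) = {v₀} for i ≠ j) and suppose each G_i admits a neighborhood 3-balanced coloring. Then the union graph (⋃ V(G_i), ⋃ E(G_i)) admits a neighborhood 3-balanced coloring. -/
open scoped Function

namespace NBalanced

variable {V : Type*}

theorem sub_const {G : SimpleGraph V} {ℓ : V → ZMod 3} (h : NBalanced G ℓ) (c : ZMod 3) :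
    NBalanced G (fun v => ℓ v - c) := by
  intro v i j
  simp only [sub_eq_iff_eq_add]
  exact h v (i + c) (j + c)

theorem iSup [Finite V] {ι : Type*} [Finite ι] {G : ι → SimpleGraph V}
    {ℓ : ι → V → ZMod 3} {L : V → ZMod 3}
    (hdisj : ∀ v, Pairwise (Disjoint on fun i => (G i).neighborSet v))
    (hagree : ∀ i v w, (G i).Adj v w → L w = ℓ i w) (hbal : ∀ i, NBalanced (G i) (ℓ i)) :
    NBalanced (⨆ i, G i) L := by
  have hsplit : ∀ v c, {w | (⨆ i, G i).Adj v w ∧ L w = c}.ncard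
      = ∑ᶠ i, {w | (G i).Adj v w ∧ ℓ i w = c}.ncard := by
    intro v c
    have hunion : {w | (⨆ i, G i).Adj v w ∧ L w = c}
        = ⋃ i, {w | (G i).Adj v w ∧ ℓ i w = c} := by
      ext w
      simp only [Set.mem_ofPred_eq, SimpleGraph.iSup_adj, Set.mem_iUnion]
      constructor
      · rintro ⟨⟨i, hadj⟩, rfl⟩
        exact ⟨i, hadj, (hagree i v w hadj).symm⟩
      · rintro ⟨i, hadj, rfl⟩
        exact ⟨⟨i, hadj⟩, hagree i v w hadj⟩
    rw [hunion, Set.ncard_iUnion_of_finite (fun _ => Set.toFinite _)]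
    exact fun i j hij => (hdisj v hij).mono (fun _ hw => hw.1) (fun _ hw => hw.1)
  intro v a b
  rw [hsplit v a, hsplit v b]
  exact finsum_congr fun i => hbal i v a b

end NBalanced

theorem Set.exists_forall_eqOn {ι V β : Type*} [Nonempty β] (S : ι → Set V) (f : ι → V → β)
    (hcompat : ∀ i j, ∀ v ∈ S i ∩ S j, f i v = f j v) :
    ∃ g : V → β, ∀ i, ∀ v ∈ S i, g v = f i v := by
  classical
  refine ⟨fun v => if h : ∃ i, v ∈ S i then f h.choose v else Classical.arbitrary β, ?_⟩
  intro i v hv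
  have h : ∃ i, v ∈ S i := ⟨i, hv⟩
  simp only [dif_pos h]
  exact hcompat _ _ v ⟨h.choose_spec, hv⟩

theorem stmt12 {V : Type*} [Fintype V] {k : ℕ} (S : Fin k → Set V) (v₀ : V)
    (G : Fin k → SimpleGraph V)
    (hS : ∀ i j, i ≠ j → S i ∩ S j = {v₀})
    (hsupp : ∀ i a b, (G i).Adj a b → a ∈ S i ∧ b ∈ S i)
    (hbal : ∀ i, ∃ ℓ, NBalanced (G i) ℓ) :
    ∃ ℓ, NBalanced (⨆ i, G i) ℓ := by
  choose ℓ hℓ using hbal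
  obtain ⟨L, hL⟩ := Set.exists_forall_eqOn S (fun i v => ℓ i v - ℓ i v₀) <| by
    intro i j v hv
    rcases eq_or_ne i j with rfl | hij
    · rfl
    · rw [hS i j hij, Set.mem_singleton_iff] at hv
      simp [hv]
  have hdisj : ∀ v, Pairwise (Disjoint on fun i => (G i).neighborSet v) := by
    intro v i j hij
    refine Set.disjoint_left.mpr fun w hwi hwj => (G i).ne_of_adj hwi ?_
    have hv : v ∈ S i ∩ S j := ⟨(hsupp i v w hwi).1, (hsupp j v w hwj).1⟩
    have hw : w ∈ S i ∩ S j := ⟨(hsupp i v w hwi).2, (hsupp j v w hwj).2⟩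
    rw [hS i j hij] at hv hw
    exact hv.trans hw.symm
  exact ⟨L, NBalanced.iSup hdisj (fun i v w hadj => hL i w (hsupp i v w hadj).2)
    fun i => (hℓ i).sub_const _⟩
end

section
/- If G₁ is a 3k₁-regular graph admitting a neighborhood 3-balanced coloring and G₂ is a 3k₂-regular graph admitting a neighborhood 3-balanced coloring (k₁, k₂ positive integers), then the join G₁ ∇ G₂ admits a neighborhood 3-balanced coloring. -/
/-- The join `G₁ ∇ G₂`: the disjoint union of `G₁` and `G₂` together with all edges
between the two vertex sets. -/
def graphJoin {V₁ V₂ : Type*} (G₁ : SimpleGraph V₁) (G₂ : SimpleGraph V₂) :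
    SimpleGraph (V₁ ⊕ V₂) where
  Adj a b :=
    match a, b with
    | Sum.inl x, Sum.inl y => G₁.Adj x y
    | Sum.inr x, Sum.inr y => G₂.Adj x y
    | Sum.inl _, Sum.inr _ => True
    | Sum.inr _, Sum.inl _ => True
  symm := by
    constructor
    intro a b h
    cases a <;> cases b <;> first | exact h.symm | trivial
  loopless := by
    constructor
    intro a h
    cases a <;> exact h.ne rfl

/-! A balanced coloring of a `3k`-regular graph gives every vertex exactly `k` neighbors of
each color, so double counting the pairs (vertex, neighbor of color `i`) yields
`|V| * k = 3k * |ℓ⁻¹(i)|`: for `k > 0` all color classes have the same size. In the join, a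
vertex of `G₁` sees its `G₁`-neighbors together with all of `V₂`, so the combined coloring is
balanced there, and symmetrically on `V₂`. -/

open Finset

theorem Set.ncard_setOf_eq_card_filter {α : Type*} [Fintype α] (p : α → Prop)
    [DecidablePred p] : {a | p a}.ncard = #{a | p a} := by
  rw [← Set.ncard_coe_finset, Finset.coe_filter_univ]

theorem Set.ncard_eq_ncard_preimage_inl_add_ncard_preimage_inr {α β : Type*} [Finite α]
    [Finite β] (s : Set (α ⊕ β)) :
    s.ncard = (Sum.inl ⁻¹' s).ncard + (Sum.inr ⁻¹' s).ncard := by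
  conv_lhs => rw [← Set.image_preimage_inl_union_image_preimage_inr s]
  rw [Set.ncard_union_eq Set.disjoint_image_inl_image_inr,
    Set.ncard_image_of_injective _ Sum.inl_injective,
    Set.ncard_image_of_injective _ Sum.inr_injective]

section graphJoin

variable {V₁ V₂ : Type*} {G₁ : SimpleGraph V₁} {G₂ : SimpleGraph V₂}

@[simp]
theorem graphJoin_adj_inl_inl {x y : V₁} :
    (graphJoin G₁ G₂).Adj (.inl x) (.inl y) ↔ G₁.Adj x y := Iff.rfl

@[simp]
theorem graphJoin_adj_inr_inr {x y : V₂} :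
    (graphJoin G₁ G₂).Adj (.inr x) (.inr y) ↔ G₂.Adj x y := Iff.rfl

@[simp]
theorem graphJoin_adj_inl_inr {x : V₁} {y : V₂} : (graphJoin G₁ G₂).Adj (.inl x) (.inr y) :=
  trivial

@[simp]
theorem graphJoin_adj_inr_inl {x : V₂} {y : V₁} : (graphJoin G₁ G₂).Adj (.inr x) (.inl y) :=
  trivial

end graphJoin

namespace NBalanced

variable {V : Type*} [Fintype V] {G : SimpleGraph V} {ℓ : V → ZMod 3} {d : ℕ}

theorem ncard_adj_color (hbal : NBalanced G ℓ) {v : V} (hv : {w | G.Adj v w}.ncard = 3 * d)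
    (i : ZMod 3) : {w | G.Adj v w ∧ ℓ w = i}.ncard = d := by
  classical
  have hfib : #{w | G.Adj v w} = ∑ j : ZMod 3, #{w | G.Adj v w ∧ ℓ w = j} := by
    rw [card_eq_sum_card_fiberwise (f := ℓ) (t := univ) fun _ _ ↦ mem_coe.2 (mem_univ _)]
    simp only [filter_filter]
  have hbal' : ∀ j, #{w | G.Adj v w ∧ ℓ w = j} = #{w | G.Adj v w ∧ ℓ w = i} := fun j ↦ by
    simpa only [Set.ncard_setOf_eq_card_filter] using hbal v j i
  rw [Set.ncard_setOf_eq_card_filter] at hv ⊢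
  simp only [hbal', sum_const, card_univ, ZMod.card, smul_eq_mul] at hfib
  omega

theorem three_mul_ncard_color (hbal : NBalanced G ℓ) (hd : 0 < d)
    (hreg : ∀ v, {w | G.Adj v w}.ncard = 3 * d) (i : ZMod 3) :
    3 * {w | ℓ w = i}.ncard = Fintype.card V := by
  classical
  have hcount := card_mul_eq_card_mul G.Adj (s := univ) (t := {w | ℓ w = i}) (m := d) (n := 3 * d)
    (fun v _ ↦ by
      rw [bipartiteAbove, filter_filter, ← hbal.ncard_adj_color (hreg v) i,
        Set.ncard_setOf_eq_card_filter]
      simp only [and_comm])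
    (fun w _ ↦ by
      rw [bipartiteBelow, ← hreg w, Set.ncard_setOf_eq_card_filter]
      simp only [G.adj_comm])
  rw [Set.ncard_setOf_eq_card_filter, ← card_univ]
  nlinarith

theorem ncard_color_eq (hbal : NBalanced G ℓ) (hd : 0 < d)
    (hreg : ∀ v, {w | G.Adj v w}.ncard = 3 * d) (i j : ZMod 3) :
    {w | ℓ w = i}.ncard = {w | ℓ w = j}.ncard := by
  have hi := hbal.three_mul_ncard_color hd hreg i
  have hj := hbal.three_mul_ncard_color hd hreg j
  omega

theorem graphJoin_sumElim {V₁ V₂ : Type*} [Finite V₁] [Finite V₂] {G₁ : SimpleGraph V₁}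
    {G₂ : SimpleGraph V₂} {ℓ₁ : V₁ → ZMod 3} {ℓ₂ : V₂ → ZMod 3}
    (h₁ : NBalanced G₁ ℓ₁) (h₂ : NBalanced G₂ ℓ₂)
    (hc₁ : ∀ i j, {w | ℓ₁ w = i}.ncard = {w | ℓ₁ w = j}.ncard)
    (hc₂ : ∀ i j, {w | ℓ₂ w = i}.ncard = {w | ℓ₂ w = j}.ncard) :
    NBalanced (graphJoin G₁ G₂) (Sum.elim ℓ₁ ℓ₂) := by
  rintro (v | v) i j <;>
    simp only [Set.ncard_eq_ncard_preimage_inl_add_ncard_preimage_inr {w | _ ∧ _},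
      Set.preimage_ofPred_eq, graphJoin_adj_inl_inl, graphJoin_adj_inl_inr, graphJoin_adj_inr_inl,
      graphJoin_adj_inr_inr, Sum.elim_inl, Sum.elim_inr, true_and]
  · rw [h₁ v i j, hc₂ i j]
  · rw [h₂ v i j, hc₁ i j]

end NBalanced

theorem stmt13 {V₁ V₂ : Type*} [Fintype V₁] [Fintype V₂]
    (G₁ : SimpleGraph V₁) (G₂ : SimpleGraph V₂) (k₁ k₂ : ℕ)
    (hk₁ : 0 < k₁) (hk₂ : 0 < k₂)
    (hreg₁ : ∀ v, {w | G₁.Adj v w}.ncard = 3 * k₁)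
    (hreg₂ : ∀ v, {w | G₂.Adj v w}.ncard = 3 * k₂)
    (h₁ : ∃ ℓ, NBalanced G₁ ℓ) (h₂ : ∃ ℓ, NBalanced G₂ ℓ) :
    ∃ ℓ, NBalanced (graphJoin G₁ G₂) ℓ := by
  obtain ⟨ℓ₁, hb₁⟩ := h₁
  obtain ⟨ℓ₂, hb₂⟩ := h₂
  exact ⟨Sum.elim ℓ₁ ℓ₂, hb₁.graphJoin_sumElim hb₂ (hb₁.ncard_color_eq hk₁ hreg₁)
    (hb₂.ncard_color_eq hk₂ hreg₂)⟩
end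

section
/- If G₁ and G₂ are graphs each admitting a neighborhood 3-balanced coloring, then the tensor product G₁ × G₂ admits a neighborhood 3-balanced coloring; in fact ℓ(u, v) = ℓ₁(u) + ℓ₂(v) works, where ℓ₁, ℓ₂ are 3-balanced colorings of G₁, G₂. -/
/-- The tensor (categorical) product of two simple graphs: `(u, v)` is adjacent to
`(u', v')` iff `u u' ∈ E(G₁)` and `v v' ∈ E(G₂)`. -/
def tensorProd {V₁ V₂ : Type*} (G₁ : SimpleGraph V₁) (G₂ : SimpleGraph V₂) :
    SimpleGraph (V₁ × V₂) where
  Adj a b := G₁.Adj a.1 b.1 ∧ G₂.Adj a.2 b.2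
  symm := ⟨fun _ _ h => ⟨h.1.symm, h.2.symm⟩⟩
  loopless := ⟨fun a h => G₁.loopless.irrefl a.1 h.1⟩

/-!
The neighbours of `(u, v)` in `G₁ × G₂` of colour `k` under `ℓ₁ + ℓ₂` split, according to the
colour `c` of their first coordinate, into the products `A c × B (k - c)`, where `A c` and `B c`
are the colour-`c` neighbours of `u` and `v`. Balancedness makes `|A c| = a` and `|B c| = b`
independent of `c`, so there are `3ab` of them whatever `k` is. Infinite neighbourhoods need no
separate treatment: `Nat.card` is then `0` on both sides.
-/

theorem Nat.card_sigma_of_forall_card_eq {ι : Type*} [Fintype ι] {X : ι → Type*} {n : ℕ}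
    (h : ∀ i, Nat.card (X i) = n) : Nat.card (Σ i, X i) = Fintype.card ι * n := by
  by_cases hfin : ∀ i, Finite (X i)
  · simp [Nat.card_sigma, h]
  · simp only [not_forall, not_finite_iff_infinite] at hfin
    obtain ⟨i, hi⟩ := hfin
    have : Infinite (Σ i, X i) := Infinite.of_injective (Sigma.mk i) sigma_mk_injective
    rw [← h i, Nat.card_eq_zero_of_infinite, Nat.card_eq_zero_of_infinite, mul_zero]

section TensorProd

variable {V₁ V₂ K : Type*} [AddCommGroup K] (G₁ : SimpleGraph V₁) (G₂ : SimpleGraph V₂)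
  (ℓ₁ : V₁ → K) (ℓ₂ : V₂ → K)

def tensorProdColorNeighborEquiv (u : V₁) (v : V₂) (k : K) :
    {w : V₁ × V₂ | (tensorProd G₁ G₂).Adj (u, v) w ∧ ℓ₁ w.1 + ℓ₂ w.2 = k} ≃
      Σ c : K, {w₁ | G₁.Adj u w₁ ∧ ℓ₁ w₁ = c} × {w₂ | G₂.Adj v w₂ ∧ ℓ₂ w₂ = k - c} where
  toFun w := ⟨ℓ₁ w.1.1, ⟨w.1.1, w.2.1.1, rfl⟩, ⟨w.1.2, w.2.1.2, eq_sub_of_add_eq' w.2.2⟩⟩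
  invFun x := ⟨(x.2.1, x.2.2), ⟨x.2.1.2.1, x.2.2.2.1⟩, by
    rw [x.2.1.2.2, x.2.2.2.2, add_sub_cancel]⟩
  left_inv _ := rfl
  right_inv := by
    rintro ⟨_, ⟨w₁, _, rfl⟩, _⟩
    rfl

theorem ncard_tensorProd_color_neighbors [Fintype K] (u : V₁) (v : V₂) (k : K) {a b : ℕ}
    (ha : ∀ c, {w₁ | G₁.Adj u w₁ ∧ ℓ₁ w₁ = c}.ncard = a)
    (hb : ∀ c, {w₂ | G₂.Adj v w₂ ∧ ℓ₂ w₂ = c}.ncard = b) :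
    {w : V₁ × V₂ | (tensorProd G₁ G₂).Adj (u, v) w ∧ ℓ₁ w.1 + ℓ₂ w.2 = k}.ncard =
      Fintype.card K * (a * b) := by
  rw [← Nat.card_coe_set_eq, Nat.card_congr (tensorProdColorNeighborEquiv G₁ G₂ ℓ₁ ℓ₂ u v k)]
  refine Nat.card_sigma_of_forall_card_eq fun c => ?_
  rw [Nat.card_prod, Nat.card_coe_set_eq, Nat.card_coe_set_eq, ha, hb]

end TensorProd

theorem NBalanced.tensorProd_add {V₁ V₂ : Type*} {G₁ : SimpleGraph V₁} {G₂ : SimpleGraph V₂}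
    {ℓ₁ : V₁ → ZMod 3} {ℓ₂ : V₂ → ZMod 3} (h₁ : NBalanced G₁ ℓ₁) (h₂ : NBalanced G₂ ℓ₂) :
    NBalanced (tensorProd G₁ G₂) (fun p => ℓ₁ p.1 + ℓ₂ p.2) := by
  rintro ⟨u, v⟩ i j
  rw [ncard_tensorProd_color_neighbors G₁ G₂ ℓ₁ ℓ₂ u v i (h₁ u · 0) (h₂ v · 0),
    ncard_tensorProd_color_neighbors G₁ G₂ ℓ₁ ℓ₂ u v j (h₁ u · 0) (h₂ v · 0)]

theorem stmt15 {V₁ V₂ : Type*} (G₁ : SimpleGraph V₁) (G₂ : SimpleGraph V₂)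
    (ℓ₁ : V₁ → ZMod 3) (ℓ₂ : V₂ → ZMod 3)
    (h₁ : NBalanced G₁ ℓ₁) (h₂ : NBalanced G₂ ℓ₂) :
    (∃ ℓ, NBalanced (tensorProd G₁ G₂) ℓ) ∧
      NBalanced (tensorProd G₁ G₂) (fun p => ℓ₁ p.1 + ℓ₂ p.2) :=
  ⟨⟨_, h₁.tensorProd_add h₂⟩, h₁.tensorProd_add h₂⟩
end

section
/- Let G₁ be a 3r₁-regular graph admitting a neighborhood 3-balanced coloring and G₂ a 2r₂-regular graph admitting a neighborhood 2-balanced coloring (a coloring by {+1, −1} such that each vertex has equally many neighbors of each sign). Then the tensor product G₁ × G₂ admits a neighborhood 3-balanced coloring, given by ℓ(u, v) = ℓ₁(u)·ℓ₂(v) where ℓ₁ takes values in ℤ/3 and ℓ₂ in {±1}. -/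
/-- A coloring by `{1, -1} ⊆ ℤ` is neighborhood 2-balanced if every vertex has an
equal number of neighbors of each sign. -/
def NBalanced2 {V : Type*} (G : SimpleGraph V) (ℓ : V → ℤ) : Prop :=
  (∀ v, ℓ v = 1 ∨ ℓ v = -1) ∧
    ∀ v : V, {w | G.Adj v w ∧ ℓ w = 1}.ncard = {w | G.Adj v w ∧ ℓ w = -1}.ncard

/-! Since `ℓ₂ = ±1`, a neighbour `(u', v')` of `(u, v)` has colour `i` exactly when either
`ℓ₂ v' = 1` and `ℓ₁ u' = i`, or `ℓ₂ v' = -1` and `ℓ₁ u' = -i`. Hence the number of such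
neighbours is `a_i b₊ + a_{-i} b₋`, where `a_k` counts the `k`-coloured neighbours of `u` and
`b_±` the `±1`-coloured neighbours of `v`; balance of `ℓ₁` makes this independent of `i`. -/

def colorNbhd {V α : Type*} (G : SimpleGraph V) (ℓ : V → α) (v : V) (i : α) : Set V :=
  {w | G.Adj v w ∧ ℓ w = i}

section TensorColoring

variable {V₁ V₂ R : Type*} [CommRing R] (G₁ : SimpleGraph V₁) (G₂ : SimpleGraph V₂)
  (ℓ₁ : V₁ → R) {ℓ₂ : V₂ → ℤ} (u : V₁) (v : V₂) (i : R)

theorem colorNbhd_tensorProd_eq (hsign : ∀ v, ℓ₂ v = 1 ∨ ℓ₂ v = -1) :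
    colorNbhd (tensorProd G₁ G₂) (fun p => (ℓ₂ p.2 : R) * ℓ₁ p.1) (u, v) i =
      colorNbhd G₁ ℓ₁ u i ×ˢ colorNbhd G₂ ℓ₂ v 1 ∪
        colorNbhd G₁ ℓ₁ u (-i) ×ˢ colorNbhd G₂ ℓ₂ v (-1) := by
  ext ⟨u', v'⟩
  rcases hsign v' with hs | hs <;> simp [colorNbhd, tensorProd, hs, neg_eq_iff_eq_neg] <;> tauto

theorem disjoint_colorNbhd_prod :
    Disjoint (colorNbhd G₁ ℓ₁ u i ×ˢ colorNbhd G₂ ℓ₂ v 1)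
      (colorNbhd G₁ ℓ₁ u (-i) ×ˢ colorNbhd G₂ ℓ₂ v (-1)) := by
  rw [Set.disjoint_left]
  rintro ⟨u', v'⟩ ⟨_, _, h₁⟩ ⟨_, _, h₂⟩
  omega

theorem ncard_colorNbhd_tensorProd [Finite V₁] [Finite V₂]
    (hsign : ∀ v, ℓ₂ v = 1 ∨ ℓ₂ v = -1) :
    (colorNbhd (tensorProd G₁ G₂) (fun p => (ℓ₂ p.2 : R) * ℓ₁ p.1) (u, v) i).ncard =
      (colorNbhd G₁ ℓ₁ u i).ncard * (colorNbhd G₂ ℓ₂ v 1).ncard +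
        (colorNbhd G₁ ℓ₁ u (-i)).ncard * (colorNbhd G₂ ℓ₂ v (-1)).ncard := by
  rw [colorNbhd_tensorProd_eq G₁ G₂ ℓ₁ u v i hsign,
    Set.ncard_union_eq (disjoint_colorNbhd_prod G₁ G₂ ℓ₁ u v i), Set.ncard_prod, Set.ncard_prod]

end TensorColoring

theorem stmt16_general {V₁ V₂ : Type*} [Fintype V₁] [Fintype V₂]
    (G₁ : SimpleGraph V₁) (G₂ : SimpleGraph V₂)
    (ℓ₁ : V₁ → ZMod 3) (h₁ : NBalanced G₁ ℓ₁)
    (ℓ₂ : V₂ → ℤ) (h₂ : NBalanced2 G₂ ℓ₂) :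
    NBalanced (tensorProd G₁ G₂) (fun p => (ℓ₂ p.2 : ZMod 3) * ℓ₁ p.1) := by
  rintro ⟨u, v⟩ i j
  have h₁' : ∀ i j, (colorNbhd G₁ ℓ₁ u i).ncard = (colorNbhd G₁ ℓ₁ u j).ncard := h₁ u
  change (colorNbhd _ _ (u, v) i).ncard = (colorNbhd _ _ (u, v) j).ncard
  rw [ncard_colorNbhd_tensorProd G₁ G₂ ℓ₁ u v i h₂.1,
    ncard_colorNbhd_tensorProd G₁ G₂ ℓ₁ u v j h₂.1, h₁' i j, h₁' (-i) (-j)]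

theorem stmt16 {V₁ V₂ : Type*} [Fintype V₁] [Fintype V₂]
    (G₁ : SimpleGraph V₁) (G₂ : SimpleGraph V₂) (r₁ r₂ : ℕ)
    (hr₁ : 0 < r₁) (hr₂ : 0 < r₂)
    (hreg₁ : ∀ v, {w | G₁.Adj v w}.ncard = 3 * r₁)
    (hreg₂ : ∀ v, {w | G₂.Adj v w}.ncard = 2 * r₂)
    (ℓ₁ : V₁ → ZMod 3) (h₁ : NBalanced G₁ ℓ₁)
    (ℓ₂ : V₂ → ℤ) (h₂ : NBalanced2 G₂ ℓ₂) :
    NBalanced (tensorProd G₁ G₂) (fun p => (ℓ₂ p.2 : ZMod 3) * ℓ₁ p.1) :=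
  stmt16_general G₁ G₂ ℓ₁ h₁ ℓ₂ h₂
end

section
/- Let G be a cubic graph with a neighborhood 3-balanced coloring ℓ : V → ℤ/3, and define the induced edge coloring ℓ(uv) = ℓ(u) + ℓ(v). Then this edge coloring is a proper 3-edge-coloring (Tait coloring) of G: the three edges incident to any vertex receive three distinct colors. In particular, for each color c ∈ ℤ/3, the set of edges colored c is a perfect matching of G. -/
/-! The three neighbours of a vertex `v` fall into three colour classes of equal size, so each
colour occurs exactly once among them. Since `ℓ v + ℓ w = c` pins down `ℓ w = c - ℓ v`, each edge
colour then occurs exactly once at `v`. -/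

theorem Set.ncard_eq_card_mul_of_ncard_fiber_eq {α β : Type*} [Fintype β] {s : Set α}
    (hs : s.Finite) (f : α → β) (b : β)
    (h : ∀ b', {x ∈ s | f x = b'}.ncard = {x ∈ s | f x = b}.ncard) :
    s.ncard = Fintype.card β * {x ∈ s | f x = b}.ncard := by
  classical
  lift s to Finset α using hs
  have fiber_ncard (b' : β) :
      {x ∈ (s : Set α) | f x = b'}.ncard = (s.filter (f · = b')).card := by
    rw [← Set.ncard_coe_finset, Finset.coe_filter]
    rfl
  rw [Set.ncard_coe_finset,
    Finset.card_eq_sum_card_fiberwise (f := f) (t := Finset.univ) (by simp)]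
  simp only [← fiber_ncard, h, Finset.sum_const, Finset.card_univ, smul_eq_mul]

theorem NBalanced.existsUnique_adj_of_ncard_neighbors_eq_three {V : Type*}
    {G : SimpleGraph V} {ℓ : V → ZMod 3} (h : NBalanced G ℓ) {v : V}
    (hv : {w | G.Adj v w}.ncard = 3) (i : ZMod 3) : ∃! w, G.Adj v w ∧ ℓ w = i := by
  have hfin : {w | G.Adj v w}.Finite := Set.finite_of_ncard_ne_zero (by rw [hv]; norm_num)
  have hcard := Set.ncard_eq_card_mul_of_ncard_fiber_eq hfin ℓ i (h v · i)
  rw [hv, ZMod.card] at hcard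
  have hone : {w | G.Adj v w ∧ ℓ w = i}.ncard = 1 := by
    change 3 = 3 * {w | G.Adj v w ∧ ℓ w = i}.ncard at hcard
    omega
  obtain ⟨a, ha⟩ := Set.ncard_eq_one.mp hone
  exact ⟨a, ha.ge (Set.mem_singleton a), fun w hw => ha.le hw⟩

theorem stmt18_general {V : Type*} (G : SimpleGraph V)
    (hcubic : ∀ v : V, {w | G.Adj v w}.ncard = 3)
    (ℓ : V → ZMod 3) (h : NBalanced G ℓ) :
    (∀ v w w' : V, G.Adj v w → G.Adj v w' → w ≠ w' →
      ℓ v + ℓ w ≠ ℓ v + ℓ w') ∧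
    (∀ c : ZMod 3, ∀ v : V, ∃! w : V, G.Adj v w ∧ ℓ v + ℓ w = c) := by
  have unique_color (v : V) (i : ZMod 3) :=
    h.existsUnique_adj_of_ncard_neighbors_eq_three (hcubic v) i
  refine ⟨fun v w w' hw hw' hne hcol => hne ?_, fun c v => ?_⟩
  · exact (unique_color v (ℓ w)).unique ⟨hw, rfl⟩ ⟨hw', (add_left_cancel hcol).symm⟩
  · simpa only [← eq_sub_iff_add_eq'] using unique_color v (c - ℓ v)

theorem stmt18 {V : Type*} [Fintype V] (G : SimpleGraph V)
    (hcubic : ∀ v : V, {w | G.Adj v w}.ncard = 3)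
    (ℓ : V → ZMod 3) (h : NBalanced G ℓ) :
    (∀ v w w' : V, G.Adj v w → G.Adj v w' → w ≠ w' →
      ℓ v + ℓ w ≠ ℓ v + ℓ w') ∧
    (∀ c : ZMod 3, ∀ v : V, ∃! w : V, G.Adj v w ∧ ℓ v + ℓ w = c) :=
  stmt18_general G hcubic ℓ h
end

section
/- Given a 3-balanced cubic dataset ({V_i}_{i∈ℤ/3}, {s_{ij}}), the graph G with vertex set the disjoint union of V_0, V_1, V_2 and edge set {v s_{ij}(v) : v ∈ V_i, i, j ∈ ℤ/3}, colored by ℓ(v) = i for v ∈ V_i, is a cubic graph and ℓ is a neighborhood 3-balanced coloring of G. Conversely, every cubic graph with a neighborhood 3-balanced coloring arises in this way from some 3-balanced cubic dataset. -/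
/-- The graph associated to a 3-balanced cubic dataset: the vertex set is the disjoint
union of the `V i`, and `⟨i, x⟩` is joined to `⟨j, s i j x⟩` for each `i, j`. -/
def dataGraph {V : ZMod 3 → Type*} (s : ∀ i j, V i ≃ V j)
    (hsymm : ∀ i j, (s i j).symm = s j i) : SimpleGraph (Σ i, V i) where
  Adj a b := a ≠ b ∧ b.2 = s a.1 b.1 a.2
  symm := ⟨by
    rintro ⟨i, x⟩ ⟨j, y⟩ ⟨hne, hadj⟩
    refine ⟨Ne.symm hne, ?_⟩
    simp only at hadj ⊢
    have hx : (s i j).symm y = x := by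
      rw [hadj]; exact (s i j).symm_apply_apply x
    rw [← hsymm i j]
    exact hx.symm⟩
  loopless := ⟨fun a h => h.1 rfl⟩

universe u

/-! Both directions go through the observation that a graph is cubic and `ℓ` is neighborhood
3-balanced exactly when every vertex has exactly one neighbor of each color. In the dataset
graph that neighbor of `⟨i, x⟩` of color `j` is `⟨j, s i j x⟩`; conversely, sending a vertex of
color `i` to its unique neighbor of color `j` gives the bijections `s i j`, and `s j i` inverts
`s i j` because adjacency is symmetric. -/

theorem Set.ncard_eq_sum_ncard_fiber {α κ : Type*} [Fintype κ] {s : Set α} (hs : s.Finite)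
    (f : α → κ) : s.ncard = ∑ c, {a ∈ s | f a = c}.ncard := by
  classical
  obtain ⟨t, rfl⟩ := hs.exists_finset_coe
  rw [Set.ncard_coe_finset, Finset.card_eq_sum_card_fiberwise fun a _ => Finset.mem_univ (f a)]
  refine Finset.sum_congr rfl fun c _ => ?_
  rw [← Set.ncard_coe_finset, Finset.coe_filter]
  rfl

theorem cubic_and_nbalanced_iff {W : Type*} (G : SimpleGraph W) (ℓ : W → ZMod 3) :
    ((∀ v, {w | G.Adj v w}.ncard = 3) ∧ NBalanced G ℓ) ↔
      ∀ v c, {w | G.Adj v w ∧ ℓ w = c}.ncard = 1 := by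
  have hsum : ∀ v, {w | G.Adj v w}.Finite →
      {w | G.Adj v w}.ncard = ∑ c, {w | G.Adj v w ∧ ℓ w = c}.ncard :=
    fun v hfin => Set.ncard_eq_sum_ncard_fiber hfin ℓ
  constructor
  · rintro ⟨hcub, hbal⟩ v j
    have hfin : {w | G.Adj v w}.Finite :=
      Set.finite_of_ncard_ne_zero (by rw [hcub v]; norm_num)
    have h3 := hsum v hfin
    rw [hcub v, Finset.sum_congr rfl fun c _ => hbal v c j, Finset.sum_const,
      Finset.card_univ, ZMod.card, smul_eq_mul] at h3
    omega
  · intro h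
    have hfin : ∀ v, {w | G.Adj v w}.Finite := fun v =>
      have hfiber : ∀ c, {w | G.Adj v w ∧ ℓ w = c}.Finite := fun c =>
        Set.finite_of_ncard_ne_zero (by rw [h v c]; norm_num)
      (Set.finite_iUnion hfiber).subset fun w hw => Set.mem_iUnion_of_mem (ℓ w) ⟨hw, rfl⟩
    refine ⟨fun v => ?_, fun v i j => by rw [h v i, h v j]⟩
    rw [hsum v (hfin v)]
    simp [h v]

theorem Set.existsUnique_mem_of_ncard_eq_one {α : Type*} {s : Set α} (hs : s.ncard = 1) :
    ∃! a, a ∈ s := by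
  obtain ⟨a, rfl⟩ := Set.ncard_eq_one.1 hs
  exact ⟨a, rfl, fun b hb => hb⟩

section ColorNeighbor

variable {W κ : Type*} {G : SimpleGraph W} {ℓ : W → κ}
  (h : ∀ v c, ∃! w, G.Adj v w ∧ ℓ w = c) {v w : W} {c : κ}

noncomputable def colorNeighbor (v : W) (c : κ) : W := (h v c).exists.choose

theorem adj_colorNeighbor : G.Adj v (colorNeighbor h v c) :=
  (h v c).exists.choose_spec.1

theorem color_colorNeighbor : ℓ (colorNeighbor h v c) = c :=
  (h v c).exists.choose_spec.2

theorem colorNeighbor_eq_of_adj (hvw : G.Adj v w) : colorNeighbor h v (ℓ w) = w :=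
  (h v (ℓ w)).unique (h v (ℓ w)).exists.choose_spec ⟨hvw, rfl⟩

theorem colorNeighbor_colorNeighbor : colorNeighbor h (colorNeighbor h v c) (ℓ v) = v :=
  colorNeighbor_eq_of_adj h (adj_colorNeighbor h).symm

theorem adj_iff_ne_and_colorNeighbor_eq : G.Adj v w ↔ v ≠ w ∧ colorNeighbor h v (ℓ w) = w :=
  ⟨fun hvw => ⟨hvw.ne, colorNeighbor_eq_of_adj h hvw⟩,
    fun ⟨_, hw⟩ => hw ▸ adj_colorNeighbor h⟩

noncomputable def colorNeighborEquiv (i j : κ) : {v // ℓ v = i} ≃ {v // ℓ v = j} where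
  toFun x := ⟨colorNeighbor h x j, color_colorNeighbor h⟩
  invFun y := ⟨colorNeighbor h y i, color_colorNeighbor h⟩
  left_inv := by
    rintro ⟨x, rfl⟩
    exact Subtype.ext (colorNeighbor_colorNeighbor h)
  right_inv := by
    rintro ⟨y, rfl⟩
    exact Subtype.ext (colorNeighbor_colorNeighbor h)

theorem colorNeighborEquiv_symm (i j : κ) :
    (colorNeighborEquiv h i j).symm = colorNeighborEquiv h j i :=
  rfl

end ColorNeighbor

section DataGraph

variable {V : ZMod 3 → Type*} {s : ∀ i j, V i ≃ V j} {hsymm : ∀ i j, (s i j).symm = s j i}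

theorem dataGraph_neighbors_of_color (hfix : ∀ i (x : V i), s i i x ≠ x) {i : ZMod 3} (x : V i)
    (c : ZMod 3) :
    {w | (dataGraph s hsymm).Adj ⟨i, x⟩ w ∧ w.1 = c} = {⟨c, s i c x⟩} := by
  ext ⟨j, y⟩
  simp only [Set.mem_ofPred_eq, Set.mem_singleton_iff, dataGraph]
  constructor
  · rintro ⟨⟨-, hy⟩, rfl⟩
    rw [hy]
  · intro hw
    obtain ⟨rfl, hy⟩ := Sigma.mk.inj_iff.1 hw
    subst hy
    refine ⟨⟨fun hxy => ?_, rfl⟩, rfl⟩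
    obtain ⟨rfl, hxy⟩ := Sigma.mk.inj_iff.1 hxy
    exact hfix _ x (eq_of_heq hxy).symm

end DataGraph

theorem stmt19 :
    (∀ (V : ZMod 3 → Type u) (s : ∀ i j, V i ≃ V j)
        (hsymm : ∀ i j, (s i j).symm = s j i)
        (_hfix : ∀ (i : ZMod 3) (x : V i), s i i x ≠ x),
      (∀ v : Σ i, V i, {w | (dataGraph s hsymm).Adj v w}.ncard = 3) ∧
        NBalanced (dataGraph s hsymm) (fun a => a.1)) ∧
    (∀ (W : Type u) (G : SimpleGraph W) (ℓ : W → ZMod 3),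
      (∀ v : W, {w | G.Adj v w}.ncard = 3) → NBalanced G ℓ →
      ∃ s : ∀ i j : ZMod 3, {v : W // ℓ v = i} ≃ {v : W // ℓ v = j},
        (∀ i j, (s i j).symm = s j i) ∧
        (∀ (i : ZMod 3) (x : {v : W // ℓ v = i}), (s i i x).1 ≠ x.1) ∧
        (∀ a b : W, G.Adj a b ↔ (a ≠ b ∧ ((s (ℓ a) (ℓ b)) ⟨a, rfl⟩).1 = b))) := by
  refine ⟨fun V s hsymm hfix => ?_, fun W G ℓ hcub hbal => ?_⟩
  · refine (cubic_and_nbalanced_iff _ _).2 fun ⟨i, x⟩ c => ?_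
    rw [dataGraph_neighbors_of_color hfix]
    exact Set.ncard_singleton _
  · have h : ∀ v c, ∃! w, G.Adj v w ∧ ℓ w = c := fun v c =>
      Set.existsUnique_mem_of_ncard_eq_one ((cubic_and_nbalanced_iff G ℓ).1 ⟨hcub, hbal⟩ v c)
    exact ⟨colorNeighborEquiv h, colorNeighborEquiv_symm h,
      fun i x => (adj_colorNeighbor h).ne', fun a b => adj_iff_ne_and_colorNeighbor_eq h⟩
end
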